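/- For s = σ + iτ with σ < 0 and τ ≠ 0, |Γ_ℝ(1-s)/Γ_ℝ(s)|² ≥ (2π)^{2σ-1} Γ(1-σ)² |τ| · |tanh(πτ/2)|. -/

import Mathlib

open Real Complex

/-- `Γ_ℝ(s) = π^{-s/2} Γ(s/2)`. -/
noncomputable def GammaR (s : ℂ) : ℂ := (Real.pi : ℂ) ^ (-s / 2) * Complex.Gamma (s / 2)

/-- `Γ_ℂ(s) = 2 (2π)^{-s} Γ(s)`. -/
noncomputable def GammaC (s : ℂ) : ℂ := 2 * (2 * Real.pi : ℂ) ^ (-s) * Complex.Gamma s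

/-- `γ_ℝ(s) = |Γ_ℝ(1-s)/Γ_ℝ(s)|`. -/
noncomputable def gammaRFactor (s : ℂ) : ℝ := ‖GammaR (1 - s) / GammaR s‖

/-- `γ_ℂ(s) = |Γ_ℂ(1-s)/Γ_ℂ(s)|^{1/2}`. -/
noncomputable def gammaCFactor (s : ℂ) : ℝ := Real.sqrt ‖GammaC (1 - s) / GammaC s‖

/-- `Γ_m(s) = min {γ_ℝ(s), γ_ℂ(s)}`. -/
noncomputable def GammaMin (s : ℂ) : ℝ := min (gammaRFactor s) (gammaCFactor s)

/-!
Reflection and duplication give `Γ_ℝ(1 - s) / Γ_ℝ(s) = Γ_ℂ(1 - s) sin(πs/2)`. Comparing the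
factors of Euler's product `GammaSeq` shows that `|Γ(x + iy)| / Γ(x)` increases with `x > 0`, so
`|Γ(1 - s)|² ≥ Γ(1 - σ)² |Γ(1 - iτ)|² = Γ(1 - σ)² πτ / sinh(πτ)`, while
`|sin(πs/2)|² = sin(πσ/2)² + sinh(πτ/2)² ≥ sinh(πτ/2)²`. The two bounds combine through
`2 sinh(x/2)² / sinh x = tanh(x/2)`.
-/

open Filter Finset ComplexConjugate

namespace Complex

lemma norm_GammaSeq (s : ℂ) {n : ℕ} (hn : n ≠ 0) :
    ‖GammaSeq s n‖ = (n : ℝ) ^ s.re * n.factorial / ∏ j ∈ range (n + 1), ‖s + j‖ := by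
  rw [GammaSeq, norm_div, norm_mul, norm_prod, ← ofReal_natCast,
    norm_cpow_eq_rpow_re_of_pos (by positivity)]
  simp

lemma norm_add_mul_I_mul_le_mul_norm {b c : ℝ} (y : ℝ) (hb : 0 ≤ b) (hbc : b ≤ c) :
    ‖(c : ℂ) + y * I‖ * b ≤ c * ‖(b : ℂ) + y * I‖ := by
  have hc : 0 ≤ c := hb.trans hbc
  refine (pow_le_pow_iff_left₀ (by positivity) (by positivity) two_ne_zero).mp ?_
  rw [mul_pow, mul_pow, Complex.sq_norm, Complex.sq_norm, normSq_add_mul_I, normSq_add_mul_I]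
  have : y ^ 2 * b ^ 2 ≤ y ^ 2 * c ^ 2 := by gcongr
  linarith

lemma GammaSeq_mul_norm_GammaSeq_le {a x : ℝ} (ha : 0 < a) (hax : a ≤ x) (y : ℝ) {n : ℕ}
    (hn : n ≠ 0) :
    Real.GammaSeq x n * ‖GammaSeq (a + y * I) n‖ ≤
      Real.GammaSeq a n * ‖GammaSeq (x + y * I) n‖ := by
  have hx : 0 < x := ha.trans_le hax
  have hterm (b : ℝ) (j : ℕ) : (b : ℂ) + y * I + j = ((b + j : ℝ) : ℂ) + y * I := by
    push_cast; ring
  simp only [norm_GammaSeq _ hn, Real.GammaSeq, add_re, ofReal_re, mul_re, I_re, I_im,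
    ofReal_im, mul_zero, mul_one, sub_zero, add_zero, hterm]
  rw [div_mul_div_comm, div_mul_div_comm, mul_comm ((n : ℝ) ^ a * _)]
  have hprod : (∏ j ∈ range (n + 1), ‖((x + j : ℝ) : ℂ) + y * I‖) * ∏ j ∈ range (n + 1), (a + j) ≤
      (∏ j ∈ range (n + 1), (x + j)) * ∏ j ∈ range (n + 1), ‖((a + j : ℝ) : ℂ) + y * I‖ := by
    rw [← prod_mul_distrib, ← prod_mul_distrib]
    exact prod_le_prod (fun j _ ↦ by positivity)
      fun j _ ↦ norm_add_mul_I_mul_le_mul_norm y (by positivity) (by linarith)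
  refine div_le_div_of_nonneg_left (by positivity) ?_ ?_
  · refine mul_pos (prod_pos fun j _ ↦ by positivity) (prod_pos fun j _ ↦ ?_)
    exact (by simp; positivity : (0 : ℝ) < _).trans_le (re_le_norm _)
  · simpa only [mul_comm] using hprod

lemma Gamma_mul_norm_Gamma_le {a x : ℝ} (ha : 0 < a) (hax : a ≤ x) (y : ℝ) :
    Real.Gamma x * ‖Gamma (a + y * I)‖ ≤ Real.Gamma a * ‖Gamma (x + y * I)‖ :=
  le_of_tendsto_of_tendsto
    ((Real.GammaSeq_tendsto_Gamma x).mul (GammaSeq_tendsto_Gamma _).norm)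
    ((Real.GammaSeq_tendsto_Gamma a).mul (GammaSeq_tendsto_Gamma _).norm)
    (eventually_ne_atTop 0 |>.mono fun _ hn ↦ GammaSeq_mul_norm_GammaSeq_le ha hax y hn)

lemma norm_Gamma_one_add_mul_I_sq {y : ℝ} (hy : y ≠ 0) :
    ‖Gamma (1 + y * I)‖ ^ 2 = π * y / Real.sinh (π * y) := by
  have hyI : (y : ℂ) * I ≠ 0 := by simp [hy]
  have hsinh : (Real.sinh (π * y) : ℂ) ≠ 0 :=
    ofReal_ne_zero.mpr <| Real.sinh_ne_zero.mpr (by positivity)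
  have hconj : conj (1 + y * I) = 1 - y * I := by simp [conj_ofReal, sub_eq_add_neg]
  have hsin : sin (π * (y * I)) = Real.sinh (π * y) * I := by
    rw [← mul_assoc, ← ofReal_mul, sin_mul_I, ofReal_sinh]
  apply ofReal_injective
  rw [ofReal_pow, ← mul_conj', ← Gamma_conj, hconj, add_comm, Gamma_add_one _ hyI, mul_assoc,
    Gamma_mul_Gamma_one_sub, hsin]
  push_cast
  field_simp

lemma Gamma_sq_mul_div_sinh_le_norm_Gamma_sq {x y : ℝ} (hx : 1 ≤ x) (hy : y ≠ 0) :
    Real.Gamma x ^ 2 * (π * y / Real.sinh (π * y)) ≤ ‖Gamma (x + y * I)‖ ^ 2 := by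
  have h := Gamma_mul_norm_Gamma_le one_pos hx y
  rw [Real.Gamma_one, one_mul, ofReal_one] at h
  rw [← norm_Gamma_one_add_mul_I_sq hy, ← mul_pow]
  have := Real.Gamma_nonneg_of_nonneg (zero_le_one.trans hx)
  gcongr

lemma norm_sin_sq (z : ℂ) : ‖sin z‖ ^ 2 = Real.sin z.re ^ 2 + Real.sinh z.im ^ 2 := by
  rw [← re_add_im z, sin_add_mul_I, ← ofReal_sin, ← ofReal_cos, ← ofReal_cosh, ← ofReal_sinh,
    ← ofReal_mul, ← ofReal_mul, Complex.sq_norm, normSq_add_mul_I]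
  simp only [add_re, ofReal_re, mul_re, I_re, I_im, ofReal_im, mul_zero, mul_one, sub_zero,
    add_zero, add_im, mul_im, zero_add]
  nlinarith [Real.sin_sq_add_cos_sq z.re, Real.cosh_sq z.im]

lemma sinh_im_sq_le_norm_sin_sq (z : ℂ) : Real.sinh z.im ^ 2 ≤ ‖sin z‖ ^ 2 := by
  rw [norm_sin_sq]
  exact le_add_of_nonneg_left (sq_nonneg _)

lemma norm_Gammaℂ (s : ℂ) : ‖Gammaℂ s‖ = 2 * (2 * π) ^ (-s.re) * ‖Gamma s‖ := by
  rw [Gammaℂ, norm_mul, norm_mul, norm_ofNat, ← ofReal_ofNat, ← ofReal_mul,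
    norm_cpow_eq_rpow_re_of_pos (by positivity), neg_re]

lemma GammaR_one_sub_div_GammaR {s : ℂ} (hs : ∀ n : ℕ, s ≠ 2 * n + 2) :
    GammaR (1 - s) / GammaR s = Gammaℂ (1 - s) * sin (π * s / 2) := by
  have h := Gammaℝ_div_Gammaℝ_one_sub (s := 1 - s) fun n h ↦ hs n (by linear_combination -h)
  rwa [sub_sub_cancel, mul_one_sub, sub_div, cos_pi_div_two_sub] at h

end Complex

lemma Real.abs_mul_abs_tanh_half (x : ℝ) :
    |x| * |tanh (x / 2)| = 2 * (x / sinh x) * sinh (x / 2) ^ 2 := by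
  rcases eq_or_ne x 0 with rfl | hx
  · simp
  have hx2 : x / 2 ≠ 0 := by positivity
  have hsinh : sinh x = 2 * sinh (x / 2) * cosh (x / 2) := by
    rw [← sinh_two_mul, mul_div_cancel₀ _ two_ne_zero]
  have hsign : 0 ≤ x * sinh (x / 2) := by
    rcases le_total 0 x with h | h
    · exact mul_nonneg h (sinh_nonneg_iff.mpr (by linarith))
    · exact mul_nonneg_of_nonpos_of_nonpos h (sinh_nonpos_iff.mpr (by linarith))
  rw [← abs_mul, tanh_eq_sinh_div_cosh, ← mul_div_assoc,
    abs_of_nonneg (div_nonneg hsign (cosh_pos _).le), hsinh]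
  have := sinh_ne_zero.mpr hx2
  have := (cosh_pos (x / 2)).ne'
  field_simp

/-- For `s = σ + iτ` with `σ < 0` and `τ ≠ 0`,
`|Γ_ℝ(1-s)/Γ_ℝ(s)|² ≥ (2π)^{2σ-1} Γ(1-σ)² |τ| |tanh(πτ/2)|`. -/
theorem abs_GammaR_ratio_sq_lower_bound (σ τ : ℝ) (hσ : σ < 0) (hτ : τ ≠ 0) :
    (2 * Real.pi) ^ (2 * σ - 1) * Real.Gamma (1 - σ) ^ 2 * |τ| *
        |Real.tanh (Real.pi * τ / 2)| ≤
      ‖GammaR (1 - (σ + τ * Complex.I)) / GammaR (σ + τ * Complex.I)‖ ^ 2 := by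
  set s : ℂ := σ + τ * Complex.I
  have hs (n : ℕ) : s ≠ 2 * n + 2 := fun h ↦ by
    have := congrArg Complex.re h
    simp [s] at this
    linarith [n.cast_nonneg (α := ℝ)]
  have hGamma : Real.Gamma (1 - σ) ^ 2 * (π * τ / Real.sinh (π * τ)) ≤
      ‖Complex.Gamma (1 - s)‖ ^ 2 := by
    have := Gamma_sq_mul_div_sinh_le_norm_Gamma_sq (by linarith : 1 ≤ 1 - σ) (neg_ne_zero.mpr hτ)
    rwa [mul_neg, Real.sinh_neg, neg_div_neg_eq,
      show ((1 - σ : ℝ) : ℂ) + (-τ : ℝ) * I = 1 - s by push_cast [s]; ring] at this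
  have hsin : Real.sinh (π * τ / 2) ^ 2 ≤ ‖Complex.sin (π * s / 2)‖ ^ 2 := by
    simpa [s] using sinh_im_sq_le_norm_sin_sq (π * s / 2)
  have hpow : (2 * π) ^ (2 * σ - 1) = ((2 * π) ^ (σ - 1)) ^ 2 * (2 * π) := by
    rw [← Real.rpow_natCast, ← Real.rpow_mul (by positivity), ← Real.rpow_add_one (by positivity)]
    norm_num
    ring_nf
  rw [GammaR_one_sub_div_GammaR hs, norm_mul, norm_Gammaℂ,
    show -(1 - s).re = σ - 1 by simp [s]]
  calc
    _ = (2 * (2 * π) ^ (σ - 1)) ^ 2 * (Real.Gamma (1 - σ) ^ 2 * (π * τ / Real.sinh (π * τ))) *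
          Real.sinh (π * τ / 2) ^ 2 := by
      rw [hpow]
      have := Real.abs_mul_abs_tanh_half (π * τ)
      rw [abs_mul, abs_of_pos pi_pos] at this
      linear_combination (2 * ((2 * π) ^ (σ - 1)) ^ 2 * Real.Gamma (1 - σ) ^ 2) * this
    _ ≤ (2 * (2 * π) ^ (σ - 1)) ^ 2 * ‖Complex.Gamma (1 - s)‖ ^ 2 *
          ‖Complex.sin (π * s / 2)‖ ^ 2 := by
      gcongr
    _ = _ := by ring
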